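/- If a triangle-free graph G admits an interval t-coloring, then t ≤ |V(G)| − 1. -/

import Mathlib

open SimpleGraph

/-- A proper edge-coloring: edges sharing a vertex get distinct colors. -/
def EProper {V : Type*} (G : SimpleGraph V) (c : Sym2 V → ℕ) : Prop :=
  ∀ v a b, G.Adj v a → G.Adj v b → a ≠ b → c s(v, a) ≠ c s(v, b)

/-- The spectrum of a vertex: set of colors on incident edges. -/
def specS {V : Type*} (G : SimpleGraph V) (c : Sym2 V → ℕ) (v : V) : Set ℕ :=
  {k | ∃ u, G.Adj v u ∧ c s(v, u) = k}

/-- An interval t-coloring: proper, uses exactly the colors 1..t, and each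
vertex's spectrum is an interval of integers. -/
def IsIntCol {V : Type*} (G : SimpleGraph V) (c : Sym2 V → ℕ) (t : ℕ) : Prop :=
  EProper G c ∧
  (∀ e ∈ G.edgeSet, 1 ≤ c e ∧ c e ≤ t) ∧
  (∀ k, 1 ≤ k → k ≤ t → ∃ e ∈ G.edgeSet, c e = k) ∧
  (∀ v, ∀ a ∈ specS G c v, ∀ b ∈ specS G c v,
     ∀ k, a ≤ k → k ≤ b → k ∈ specS G c v)

/-- Interval colorability. -/
def IntColorable {V : Type*} (G : SimpleGraph V) : Prop :=
  ∃ t c, IsIntCol G c t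

/-- Least t admitting an interval t-coloring. -/
noncomputable def wInt {V : Type*} (G : SimpleGraph V) : ℕ :=
  sInf {t | ∃ c, IsIntCol G c t}

/-- Greatest t admitting an interval t-coloring. -/
noncomputable def WInt {V : Type*} (G : SimpleGraph V) : ℕ :=
  sSup {t | ∃ c, IsIntCol G c t}

/-- The set of values `max S(v,c)` over vertices v. -/
def maxSpecSet {V : Type*} (G : SimpleGraph V) (c : Sym2 V → ℕ) : Set ℕ :=
  {m | ∃ v, sSup (specS G c v) = m}

/-- The sorted sequence of largest incident colors is continuous: every integer
between its minimum and maximum is attained. -/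
def MaxSpecContinuous {V : Type*} (G : SimpleGraph V) (c : Sym2 V → ℕ) : Prop :=
  ∀ k, sInf (maxSpecSet G c) ≤ k → k ≤ sSup (maxSpecSet G c) → k ∈ maxSpecSet G c

/-- The composition (lexicographic product) G[H]. -/
def lexComp {V W : Type*} (G : SimpleGraph V) (H : SimpleGraph W) :
    SimpleGraph (V × W) where
  Adj a b := G.Adj a.1 b.1 ∨ (a.1 = b.1 ∧ H.Adj a.2 b.2)
  symm := by
    constructor
    intro a b h
    rcases h with h | ⟨h1, h2⟩
    · exact Or.inl h.symm
    · exact Or.inr ⟨h1.symm, h2.symm⟩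
  loopless := by
    constructor
    intro a h
    rcases h with h | ⟨_, h2⟩
    · exact G.loopless.irrefl _ h
    · exact H.loopless.irrefl _ h2

/-- The chromatic index: least number of colors in a proper edge-coloring. -/
noncomputable def chromIndex {V : Type*} (G : SimpleGraph V) : ℕ :=
  sInf {k | ∃ c, EProper G c ∧ ∀ e ∈ G.edgeSet, c e < k}

/-!
Call a *descent* a walk whose edge colours do not increase, starting with an edge of colour `t`,
and let `s` be the least colour at which a descent can end. Take a descent ending at `s` that is
as short as possible and, among those, lexicographically largest. Every colour `γ ∈ [s, t]`
lies in the spectrum of the walk vertex whose block of colours contains it; sending `γ` to the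
neighbour along colour `γ`, plus one vertex of the walk, gives `t - s + 2` vertices. They are
distinct: a coincidence yields a triangle, two edges of one colour at a vertex, or a shorter
or lexicographically larger descent. No vertex reached by a descent carries a colour below `s`,
so the edges of colour `< s` form an interval `(s - 1)`-colouring on other vertices, and
induction on `t` gives `t + 1` vertices in all.
-/

namespace IntervalColoring

variable {V : Type*} {G : SimpleGraph V} {c : Sym2 V → ℕ}

lemma _root_.EProper.eq_of_color_eq (hP : EProper G c) {x a b : V} (ha : G.Adj x a)
    (hb : G.Adj x b) (h : c s(x, a) = c s(x, b)) : a = b :=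
  by_contra fun hab => hP x a b ha hb hab h

lemma color_mem_specS_right {x y : V} (h : G.Adj x y) : c s(x, y) ∈ specS G c y :=
  ⟨x, h.symm, by rw [Sym2.eq_swap]⟩

lemma _root_.Finset.sum_lt_sum_of_eq_off_pair {ι : Type*} [DecidableEq ι] {s : Finset ι}
    {f g : ι → ℕ} {a b : ι} (ha : a ∈ s) (hb : b ∈ s) (hab : a ≠ b)
    (heq : ∀ x ∈ s, x ≠ a → x ≠ b → f x = g x) (hlt : f a + f b < g a + g b) :
    ∑ x ∈ s, f x < ∑ x ∈ s, g x := by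
  have split (h : ι → ℕ) :
      ∑ x ∈ s, h x = h a + h b + ∑ x ∈ (s.erase a).erase b, h x := by
    rw [← Finset.add_sum_erase _ _ ha,
      ← Finset.add_sum_erase _ _ (Finset.mem_erase.2 ⟨hab.symm, hb⟩), add_assoc]
  have hrest : ∑ x ∈ (s.erase a).erase b, f x = ∑ x ∈ (s.erase a).erase b, g x :=
    Finset.sum_congr rfl fun x hx => heq x (Finset.mem_of_mem_erase (Finset.mem_of_mem_erase hx))
      (Finset.ne_of_mem_erase (Finset.mem_of_mem_erase hx)) (Finset.ne_of_mem_erase hx)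
  rw [split f, split g, hrest]
  omega

/-- A walk `v 0, …, v len` whose edge colours do not increase: the edge `v l v (l + 1)` has colour
`cut l`, and the final cut `cut len` is some colour at `v len`. When spectra are intervals, every
colour of `[cut i, cut (i - 1)]` is then seen at `v i`. -/
structure Descent (G : SimpleGraph V) (c : Sym2 V → ℕ) where
  len : ℕ
  v : ℕ → V
  cut : ℕ → ℕ
  len_pos : 0 < len
  link : ∀ l < len,
    G.Adj (v l) (v (l + 1)) ∧ c s(v l, v (l + 1)) = cut l ∧ cut (l + 1) ≤ cut l
  cut_len_mem : cut len ∈ specS G c (v len)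

namespace Descent

variable (D : Descent G c)

lemma cut_anti {k l : ℕ} (hkl : k ≤ l) (hl : l ≤ D.len) : D.cut l ≤ D.cut k := by
  induction l, hkl using Nat.le_induction with
  | base => exact le_rfl
  | succ l hkl ih => exact (D.link l (by omega)).2.2.trans (ih (by omega))

lemma cut_mem {i : ℕ} (hi : i ≤ D.len) : D.cut i ∈ specS G c (D.v i) := by
  rcases hi.lt_or_eq with hi | rfl
  · exact ⟨_, (D.link i hi).1, (D.link i hi).2.1⟩
  · exact D.cut_len_mem

lemma cut_pred_mem {i : ℕ} (hi : i ≤ D.len) : D.cut (i - 1) ∈ specS G c (D.v i) := by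
  rcases i with _ | i
  · exact D.cut_mem hi
  · obtain ⟨hadj, hcol, -⟩ := D.link i (by omega)
    exact hcol ▸ color_mem_specS_right hadj

lemma mem_specS (hI : ∀ x, (specS G c x).OrdConnected) {i γ : ℕ} (hi : i ≤ D.len)
    (h₁ : D.cut i ≤ γ) (h₂ : γ ≤ D.cut (i - 1)) : γ ∈ specS G c (D.v i) :=
  (hI _).out (D.cut_mem hi) (D.cut_pred_mem hi) ⟨h₁, h₂⟩

def ofAdj {x y : V} (h : G.Adj x y) : Descent G c where
  len := 1
  v l := if l = 0 then x else y
  cut _ := c s(x, y)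
  len_pos := one_pos
  link l hl := by
    obtain rfl : l = 0 := by omega
    exact ⟨h, rfl, le_rfl⟩
  cut_len_mem := color_mem_specS_right h

def branch (p : ℕ) (u : V) (α β : ℕ) (hp : p ≤ D.len) (hα : α ≤ D.cut (p - 1))
    (hu : G.Adj (D.v p) u) (hcol : c s(D.v p, u) = α) (hβ : β ≤ α)
    (hβu : β ∈ specS G c u) : Descent G c where
  len := p + 1
  v l := if l ≤ p then D.v l else u
  cut l := if l < p then D.cut l else if l = p then α else β
  len_pos := p.succ_pos
  link l hl := by
    rcases (show l + 1 < p ∨ l + 1 = p ∨ l = p by omega) with h | rfl | rfl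
    · simpa [show l ≤ p by omega, show l + 1 ≤ p by omega, show l < p by omega, h]
        using D.link l (by omega)
    · obtain ⟨h₁, h₂, -⟩ := D.link l hp
      simpa using ⟨h₁, h₂, hα⟩
    · simpa using ⟨hu, hcol, hβ⟩
  cut_len_mem := by simpa using hβu

def append (E D : Descent G c) (q : ℕ) (hq : q ≤ D.len) (hadj : G.Adj (E.v E.len) (D.v q))
    (hcol : c s(E.v E.len, D.v q) = E.cut E.len) (hle : D.cut q ≤ E.cut E.len) :
    Descent G c where
  len := E.len + 1 + (D.len - q)
  v l := if l ≤ E.len then E.v l else D.v (l - (E.len + 1) + q)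
  cut l := if l ≤ E.len then E.cut l else D.cut (l - (E.len + 1) + q)
  len_pos := by omega
  link l hl := by
    rcases (show l < E.len ∨ l = E.len ∨ E.len < l by omega) with h | rfl | h
    · simpa [h.le, show l + 1 ≤ E.len by omega] using E.link l h
    · simpa using ⟨hadj, hcol, hle⟩
    · have := D.link (l - (E.len + 1) + q) (by omega)
      simpa [show ¬ l ≤ E.len by omega, show ¬ l < E.len by omega,
        show l - E.len + q = l - (E.len + 1) + q + 1 by omega] using this
  cut_len_mem := by
    simpa [Nat.sub_add_cancel hq, show ¬ E.len + 1 + (D.len - q) ≤ E.len by omega]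
      using D.cut_len_mem

lemma exists_detour {p q : ℕ} {u : V} {α β : ℕ} (hp : p ≤ D.len) (hq : q ≤ D.len)
    (hα : α ≤ D.cut (p - 1)) (hu : G.Adj (D.v p) u) (hcolu : c s(D.v p, u) = α)
    (hβ : β ≤ α) (hw : G.Adj u (D.v q)) (hcolw : c s(u, D.v q) = β) (hle : D.cut q ≤ β) :
    ∃ D' : Descent G c, D'.len + q = D.len + p + 2 ∧ D'.cut D'.len = D.cut D.len ∧
      (∀ l < p, D'.cut l = D.cut l) ∧ D'.cut p = α ∧ D'.cut (p + 1) = β ∧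
      ∀ l, p + 2 ≤ l → D'.cut l = D.cut (l + q - (p + 2)) := by
  let E := D.branch p u α β hp hα hu hcolu hβ ⟨D.v q, hw, hcolw⟩
  refine ⟨E.append D q hq (by simpa [E, branch] using hw) (by simpa [E, branch] using hcolw)
    (by simpa [E, branch] using hle), ?_, ?_, ?_, ?_, ?_, ?_⟩
  · simp only [append, E, branch]
    omega
  · simp [append, E, branch, Nat.sub_add_cancel hq,
      show ¬ p + 1 + 1 + (D.len - q) ≤ p + 1 by omega]
  · intro l hl
    simp [append, E, branch, hl, show ¬ p + 1 < l by omega]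
  · simp [append, E, branch]
  · simp [append, E, branch]
  · intro l hl
    simp [append, E, branch, show ¬ l ≤ p + 1 by omega,
      show l - (p + 2) + q = l + q - (p + 2) by omega]

end Descent

def descentSupport (G : SimpleGraph V) (c : Sym2 V → ℕ) (T : ℕ) : Set V :=
  {x | ∃ D : Descent G c, D.cut 0 = T ∧ ∃ l, 1 ≤ l ∧ l ≤ D.len ∧ D.v l = x}

lemma disjoint_descentSupport_support_deleteEdges {T s : ℕ}
    (hs : ∀ D : Descent G c, D.cut 0 = T → s ≤ D.cut D.len) :
    Disjoint (descentSupport G c T) (G.deleteEdges {e | s ≤ c e}).support := by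
  rw [Set.disjoint_left]
  rintro _ ⟨D, rfl, l, hl₁, hl, rfl⟩ hx
  obtain ⟨y, hy⟩ := (mem_support _).1 hx
  rw [deleteEdges_adj, Set.mem_ofPred_eq, not_le] at hy
  have hbot := hs D rfl
  by_cases h : c s(D.v l, y) ≤ D.cut (l - 1)
  · have := hs (D.branch l y _ _ hl h hy.1 rfl le_rfl (color_mem_specS_right hy.1))
      (by simp [Descent.branch, show 0 < l by omega])
    simp only [Descent.branch, ite_self, add_lt_iff_neg_left, not_lt_zero, ↓reduceIte] at this
    omega
  · have := D.cut_anti (show l - 1 ≤ D.len by omega) le_rfl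
    omega

lemma descentSupport_subset_support (T : ℕ) : descentSupport G c T ⊆ G.support := by
  rintro _ ⟨D, -, l, hl₁, hl, rfl⟩
  obtain ⟨hadj, -⟩ := D.link (l - 1) (by omega)
  rw [Nat.sub_add_cancel hl₁] at hadj
  exact ⟨_, hadj.symm⟩

namespace Descent

variable (D : Descent G c)

/-- With base `3`, raising one cut outweighs lowering the next one: `2 * 3 ^ a < 3 ^ (a + 1)`. -/
def weight : ℕ := ∑ l ∈ Finset.range (D.len + 1), 3 ^ D.cut l

lemma weight_le : D.weight ≤ (D.len + 1) * 3 ^ D.cut 0 := by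
  calc D.weight ≤ (Finset.range (D.len + 1)).card • 3 ^ D.cut 0 :=
        Finset.sum_le_card_nsmul _ _ _ fun l hl => Nat.pow_le_pow_right (by norm_num)
          (D.cut_anti (Nat.zero_le l) (Nat.lt_succ_iff.1 (Finset.mem_range.1 hl)))
    _ = (D.len + 1) * 3 ^ D.cut 0 := by rw [Finset.card_range, smul_eq_mul]

def IsOptimal : Prop :=
  ∀ D' : Descent G c, D'.cut 0 = D.cut 0 → D'.cut D'.len = D.cut D.len →
    D.len ≤ D'.len ∧ (D'.len = D.len → D'.weight ≤ D.weight)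

theorem exists_isOptimal : ∃ D' : Descent G c, D'.cut 0 = D.cut 0 ∧
    D'.cut D'.len = D.cut D.len ∧ D'.IsOptimal := by
  let key : Descent G c → ℕ ×ₗ ℕ := fun D' =>
    toLex (D'.len, (D'.len + 1) * 3 ^ D.cut 0 - D'.weight)
  obtain ⟨D', ⟨htop, hbot⟩, hmin⟩ := (InvImage.wf key wellFounded_lt).has_min
    {D' | D'.cut 0 = D.cut 0 ∧ D'.cut D'.len = D.cut D.len} ⟨D, rfl, rfl⟩
  refine ⟨D', htop, hbot, fun D'' htop' hbot' => ?_⟩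
  have h := hmin D'' ⟨htop'.trans htop, hbot'.trans hbot⟩
  simp only [InvImage, key, Prod.Lex.toLex_lt_toLex, not_or, not_and, not_lt] at h
  have hw := D'.weight_le
  have hw' := D''.weight_le
  rw [htop] at hw
  rw [htop', htop] at hw'
  refine ⟨h.1, fun hlen => ?_⟩
  have := h.2 hlen
  rw [hlen] at this hw'
  omega

/-- `v i` owns the colours of `[cut i, cut (i - 1))`, except that `v 1` also owns the top colour
`cut 0`. Since `0 - 1 = 0`, the vertex `v 0` owns exactly `cut 0`. -/
def Owns (i γ : ℕ) : Prop :=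
  i ≤ D.len ∧ D.cut i ≤ γ ∧ γ ≤ D.cut (i - 1) ∧ (2 ≤ i → γ < D.cut (i - 1))

lemma exists_owns {γ : ℕ} (h₁ : D.cut D.len ≤ γ) (h₂ : γ ≤ D.cut 0) :
    ∃ i, 1 ≤ i ∧ D.Owns i γ := by
  classical
  have hex : ∃ i, 1 ≤ i ∧ D.cut i ≤ γ := ⟨D.len, D.len_pos, h₁⟩
  obtain ⟨hi₁, hiγ⟩ := Nat.find_spec hex
  have hprev : 2 ≤ Nat.find hex → γ < D.cut (Nat.find hex - 1) := fun h => by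
    have := Nat.find_min hex (show Nat.find hex - 1 < Nat.find hex by omega)
    omega
  refine ⟨Nat.find hex, hi₁, Nat.find_min' hex ⟨D.len_pos, h₁⟩, hiγ, ?_, hprev⟩
  rcases (show Nat.find hex = 1 ∨ 2 ≤ Nat.find hex by omega) with h | h
  · rwa [h]
  · exact (hprev h).le

theorem IsOptimal.eq_of_adj_of_adj {D : Descent G c} (hD : D.IsOptimal) (hG : G.CliqueFree 3)
    (hP : EProper G c) {i j γ γ' : ℕ} {u : V} (hi : D.Owns i γ) (hj : D.Owns j γ')
    (hu : G.Adj (D.v i) u) (hγ : c s(D.v i, u) = γ) (hu' : G.Adj (D.v j) u)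
    (hγ' : c s(D.v j, u) = γ') : i = j := by
  wlog hij : i < j generalizing i j γ γ'
  · rcases lt_trichotomy i j with h | h | h
    · exact absurd h hij
    · exact h
    · exact (this hj hi hu' hγ' hu hγ h).symm
  exfalso
  have hjlen : j ≤ D.len := hj.1
  obtain ⟨hadj, hcol, -⟩ := D.link i (by omega)
  rcases (show j = i + 1 ∨ i + 2 ≤ j by omega) with rfl | hj₂
  · exact isIndepSet_neighborSet_of_triangleFree _ hG _ hadj hu hu'.ne hu'
  -- Replace `v (i + 1), …, v (j - 1)` by `u`; optimality forces `j = i + 2`.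
  have hγ'γ : γ' ≤ γ := hj.2.2.1.trans ((D.cut_anti (by omega) (by omega)).trans hi.2.1)
  obtain ⟨D', hlen, hbot, hpre, hp, hp₁, hsuf⟩ :=
    D.exists_detour hi.1 hj.1 hi.2.2.1 hu hγ hγ'γ hu'.symm (by rw [Sym2.eq_swap, hγ']) hj.2.1
  have htop : D'.cut 0 = D.cut 0 := by
    rcases Nat.eq_zero_or_pos i with rfl | hi₀
    · exact hp.trans (le_antisymm hi.2.2.1 hi.2.1)
    · exact hpre 0 hi₀
  obtain ⟨hlen', hweight⟩ := hD D' htop hbot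
  obtain rfl : j = i + 2 := by omega
  rcases hi.2.1.lt_or_eq with hlt | heq
  · refine (hweight (by omega)).not_gt ?_
    unfold weight
    rw [show D'.len = D.len by omega]
    refine Finset.sum_lt_sum_of_eq_off_pair (Finset.mem_range.2 (by omega))
      (Finset.mem_range.2 (by omega)) (by omega : i ≠ i + 1) (fun l _ h₁ h₂ => ?_) ?_
    · rcases Nat.lt_or_ge l i with hl | hl
      · rw [hpre l hl]
      · rw [hsuf l (by omega), Nat.add_sub_cancel]
    · have h₁ := Nat.pow_le_pow_right (show 0 < 3 by norm_num)
        (D.cut_anti (show i ≤ i + 1 by omega) (by omega))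
      have h₂ := Nat.pow_le_pow_right (show 0 < 3 by norm_num) hlt
      have h₃ := pow_pos (show 0 < 3 by norm_num) (D.cut i)
      rw [pow_succ] at h₂
      rw [hp, hp₁]
      exact lt_of_lt_of_le (by omega) (Nat.le_add_right _ _)
  · -- `γ = cut i` forces `u = v (i + 1)`, whose edge to `v (i + 2)` has colour `cut (i + 1)`.
    obtain rfl : u = D.v (i + 1) := hP.eq_of_color_eq hu hadj (by rw [hγ, hcol, heq])
    obtain ⟨-, hcol₂, -⟩ := D.link (i + 1) (by omega)
    have := hj.2.2.2 (by omega)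
    rw [Sym2.eq_swap, hcol₂] at hγ'
    rw [show i + 2 - 1 = i + 1 by omega] at this
    omega

lemma mem_descentSupport_of_owns {i γ : ℕ} {u : V} (hi : D.Owns i γ) (hu : G.Adj (D.v i) u)
    (hγ : c s(D.v i, u) = γ) : u ∈ descentSupport G c (D.cut 0) := by
  refine ⟨D.branch i u γ γ hi.1 hi.2.2.1 hu hγ le_rfl (hγ ▸ color_mem_specS_right hu), ?_,
    i + 1, by omega, by simp [branch], by simp [branch]⟩
  rcases Nat.eq_zero_or_pos i with rfl | hi₀
  · simpa [branch] using le_antisymm hi.2.2.1 hi.2.1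
  · simp [branch, hi₀]

theorem IsOptimal.top_add_two_le_ncard [Finite V] {D : Descent G c} (hD : D.IsOptimal)
    (hG : G.CliqueFree 3) (hP : EProper G c)
    (hI : ∀ x, (specS G c x).OrdConnected) :
    D.cut 0 + 2 ≤ D.cut D.len + (descentSupport G c (D.cut 0)).ncard := by
  set T := D.cut 0
  set β := D.cut D.len
  have hβT : β ≤ T := D.cut_anti (Nat.zero_le _) le_rfl
  have hex : ∀ γ ∈ Set.Icc β (T + 1), ∃ i u, D.Owns i (min γ T) ∧
      (i = 0 ↔ γ = T + 1) ∧ G.Adj (D.v i) u ∧ c s(D.v i, u) = min γ T := by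
    rintro γ ⟨h₁, h₂⟩
    rcases h₂.lt_or_eq with h₂ | rfl
    · obtain ⟨i, hi₁, hi⟩ := D.exists_owns (γ := γ) h₁ (by omega)
      rw [min_eq_left (by omega)]
      obtain ⟨u, hu, hcu⟩ := D.mem_specS hI hi.1 hi.2.1 hi.2.2.1
      exact ⟨i, u, hi, by omega, hu, hcu⟩
    · obtain ⟨hadj, hcol, -⟩ := D.link 0 D.len_pos
      rw [min_eq_right (by omega)]
      exact ⟨0, D.v 1, ⟨Nat.zero_le _, le_rfl, le_rfl, by omega⟩, by simp, hadj, hcol⟩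
  have : Nonempty V := ⟨D.v 0⟩
  choose! i u hiu using hex
  have hinj : Set.InjOn u (Set.Icc β (T + 1)) := by
    intro γ hγ γ' hγ' h
    obtain ⟨hi, hi₀, hu, hcu⟩ := hiu γ hγ
    obtain ⟨hi', hi₀', hu', hcu'⟩ := hiu γ' hγ'
    rw [← h] at hu' hcu'
    have hii := hD.eq_of_adj_of_adj hG hP hi hi' hu hcu hu' hcu'
    rw [hii] at hcu hi₀
    have := hcu.symm.trans hcu'
    have := hi₀.symm.trans hi₀'
    rw [Set.mem_Icc] at hγ hγ'
    by_cases hγT : γ = T + 1 <;> omega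
  calc T + 2 = β + (Set.Icc β (T + 1)).ncard := by rw [Set.ncard_Icc_nat]; omega
    _ ≤ β + (descentSupport G c T).ncard := by
      gcongr
      exact Set.ncard_le_ncard_of_injOn u (fun γ hγ => D.mem_descentSupport_of_owns
        (hiu γ hγ).1 (hiu γ hγ).2.2.1 (hiu γ hγ).2.2.2) hinj

end Descent

lemma _root_.IsIntCol.deleteEdges {t s : ℕ} (hc : IsIntCol G c t) (hs : s ≤ t + 1) :
    IsIntCol (G.deleteEdges {e | s ≤ c e}) c (s - 1) := by
  obtain ⟨hP, hR, hU, hI⟩ := hc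
  refine ⟨fun x a b ha hb => hP x a b (deleteEdges_adj.1 ha).1 (deleteEdges_adj.1 hb).1,
    fun e he => ?_, fun k hk₁ hk₂ => ?_, fun x a ha b hb k hak hkb => ?_⟩
  · rw [edgeSet_deleteEdges] at he
    have := hR e he.1
    have := he.2
    simp only [Set.mem_ofPred_eq, not_le] at this
    omega
  · obtain ⟨e, he, rfl⟩ := hU k hk₁ (by omega)
    refine ⟨e, ?_, rfl⟩
    rw [edgeSet_deleteEdges]
    exact ⟨he, by simp only [Set.mem_ofPred_eq, not_le]; omega⟩
  · obtain ⟨ua, hua, rfl⟩ := ha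
    obtain ⟨ub, hub, rfl⟩ := hb
    rw [deleteEdges_adj] at hua hub
    obtain ⟨w, hw, hcw⟩ := hI x _ ⟨ua, hua.1, rfl⟩ _ ⟨ub, hub.1, rfl⟩ k hak hkb
    refine ⟨w, deleteEdges_adj.2 ⟨hw, ?_⟩, hcw⟩
    have := hub.2
    simp only [Set.mem_ofPred_eq, not_le] at this ⊢
    omega

theorem _root_.IsIntCol.lt_ncard_support [Finite V] {t : ℕ} (hG : G.CliqueFree 3)
    (hc : IsIntCol G c t) (ht : 0 < t) : t < G.support.ncard := by
  induction t using Nat.strong_induction_on generalizing G with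
  | _ t ih =>
  obtain ⟨hP, hR, hU, hI⟩ := hc
  have hI' : ∀ x, (specS G c x).OrdConnected := fun x =>
    ⟨fun a ha b hb k hk => hI x a ha b hb k hk.1 hk.2⟩
  obtain ⟨x, y, hxy, hcxy⟩ : ∃ x y, G.Adj x y ∧ c s(x, y) = t := by
    obtain ⟨e, he, hce⟩ := hU t ht le_rfl
    induction e using Sym2.ind with
    | _ x y => exact ⟨x, y, he, hce⟩
  classical
  have hex : ∃ s, ∃ D : Descent G c, D.cut 0 = t ∧ D.cut D.len = s :=
    ⟨t, Descent.ofAdj hxy, hcxy, hcxy⟩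
  set s := Nat.find hex with hs
  obtain ⟨D₀, htop₀, hbot₀⟩ := Nat.find_spec hex
  obtain ⟨D, htop, hbot, hD⟩ := D₀.exists_isOptimal
  have hcount := hD.top_add_two_le_ncard hG hP hI'
  rw [htop, htop₀, hbot, hbot₀, ← hs] at hcount
  have hdisj : Disjoint (descentSupport G c t) (G.deleteEdges {e | s ≤ c e}).support :=
    disjoint_descentSupport_support_deleteEdges fun D hD => Nat.find_min' hex ⟨D, hD, rfl⟩
  have hlow : s - 1 ≤ (G.deleteEdges {e | s ≤ c e}).support.ncard := by
    rcases Nat.eq_zero_or_pos (s - 1) with h | h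
    · omega
    · have hst : s ≤ t := Nat.find_min' hex ⟨Descent.ofAdj hxy, hcxy, hcxy⟩
      exact (ih (s - 1) (by omega) (hG.anti (deleteEdges_le _))
        (IsIntCol.deleteEdges ⟨hP, hR, hU, hI⟩ (by omega)) h).le
  have hunion := Set.ncard_union_eq hdisj
  have hsub := Set.ncard_le_ncard <| Set.union_subset
    (descentSupport_subset_support (G := G) (c := c) t)
    (support_mono (G.deleteEdges_le {e | s ≤ c e}))
  omega

end IntervalColoring

/-- If a triangle-free graph admits an interval t-coloring, then t ≤ |V(G)| − 1. -/
theorem stmt18 {V : Type*} [Fintype V] (G : SimpleGraph V) (hG : G.CliqueFree 3)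
    (t : ℕ) (c : Sym2 V → ℕ) (hc : IsIntCol G c t) :
    t ≤ Fintype.card V - 1 := by
  rcases Nat.eq_zero_or_pos t with rfl | ht
  · exact Nat.zero_le _
  · have := hc.lt_ncard_support hG ht
    have := G.support.ncard_le_card
    rw [Nat.card_eq_fintype_card] at this
    omega
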